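/- For every Λ > 0 and M ≥ 0 there exist finite positive constants R = R(Λ,M) and C = C(Λ,M) with the following property: for every ℓ > R, every V ∈ C_c^∞((0,∞)) with sup_t |V(t)| ≤ M, every λ < Λ, and every twice continuously differentiable function φ : [0,ℓ] → ℝ, not identically zero, satisfying −φ″(t) + (t + V(t))φ(t) = λ φ(t) for all t ∈ (0,ℓ), φ(0) = 0, and either φ(ℓ) = 0 or φ′(ℓ) = 0, one has ∫_R^ℓ (φ′(t)² + φ(t)²) e^{t^{3/2}} dt ≤ C ∫_0^ℓ φ(t)² dt. -/

import Mathlib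

open Filter MeasureTheory Real Set Topology

noncomputable section

abbrev E2 := EuclideanSpace ℝ (Fin 2)

def IsTestFun2 (ω : Set E2) (ψ : E2 → ℝ) : Prop :=
  ContDiff ℝ (⊤ : ℕ∞) ψ ∧ HasCompactSupport ψ ∧ tsupport ψ ⊆ ω

def countN (h : ℝ) (W : E2 → ℝ) (ω : Set E2) (Λ : ℝ) : ℕ :=
  sSup {n : ℕ | ∃ M : Submodule ℝ (E2 → ℝ),
    Module.finrank ℝ M = n ∧
    (∀ ψ ∈ M, IsTestFun2 ω ψ) ∧
    (∀ ψ ∈ M, ψ ≠ 0 →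
      (∫ x in ω, (h ^ 2 * ‖fderiv ℝ ψ x‖ ^ 2 + W x * ψ x ^ 2))
        < Λ * ∫ x in ω, ψ x ^ 2)}

def rieszMean (γ h : ℝ) (W : E2 → ℝ) (ω : Set E2) (Λ : ℝ) : ℝ :=
  if γ = 0 then countN h W ω Λ
  else γ * ∫ E in Ioi (0:ℝ), (countN h W ω (Λ - E) : ℝ) * E ^ (γ - 1)

def IsTestFun1 (I : Set ℝ) (ψ : ℝ → ℝ) : Prop :=
  ContDiff ℝ (⊤ : ℕ∞) ψ ∧ HasCompactSupport ψ ∧ tsupport ψ ⊆ I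

def halfLineLevel (V : ℝ → ℝ) (k : ℕ) : ℝ :=
  sInf {c : ℝ | ∃ M : Submodule ℝ (ℝ → ℝ),
    Module.finrank ℝ M = k ∧
    (∀ ψ ∈ M, IsTestFun1 (Ioi 0) ψ) ∧
    (∀ ψ ∈ M,
      (∫ t in Ioi (0:ℝ), (deriv ψ t ^ 2 + (t + V t) * ψ t ^ 2))
        ≤ c * ∫ t in Ioi (0:ℝ), ψ t ^ 2)}

def airyZero (k : ℕ) : ℝ := halfLineLevel (fun _ => 0) k

def Lcl (γ : ℝ) (d : ℕ) : ℝ :=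
  Real.Gamma (γ + 1) / ((4 * π) ^ ((d : ℝ) / 2) * Real.Gamma (γ + 1 + d / 2))

def tangentVec (a : ℝ) : E2 := WithLp.toLp 2 ![-Real.sin a, Real.cos a]
def normalVec (a : ℝ) : E2 := WithLp.toLp 2 ![Real.cos a, Real.sin a]

structure StarkDomain where
  Ω : Set E2
  X₀ : E2
  δ : ℝ
  curve : ℝ → E2
  θ : ℝ → ℝ
  isOpen : IsOpen Ω
  bounded : Bornology.IsBounded Ω
  connected : IsConnected Ω
  X₀_mem : X₀ ∈ frontier Ω
  X₀_coord : X₀ 0 = 0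
  X₀_min : ∀ x ∈ closure Ω, X₀ 0 ≤ x 0
  X₀_uniq : ∀ x ∈ closure Ω, x 0 = X₀ 0 → x = X₀
  δ_pos : 0 < δ
  curve_smooth : ContDiffOn ℝ (⊤ : ℕ∞) curve (Ioo (-δ) δ)
  θ_smooth : ContDiffOn ℝ (⊤ : ℕ∞) θ (Ioo (-δ) δ)
  curve_zero : curve 0 = X₀
  curve_bdry : ∀ s ∈ Ioo (-δ) δ, curve s ∈ frontier Ω
  curve_deriv : ∀ s ∈ Ioo (-δ) δ, HasDerivAt curve (tangentVec (θ s)) s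
  curv_pos : 0 < deriv θ 0
  tau_inj : InjOn (fun p : ℝ × ℝ => curve p.1 - p.2 • normalVec (θ p.1))
    ((Ioo (-δ) δ) ×ˢ (Ioo 0 δ))
  tau_maps : ∀ p ∈ (Ioo (-δ) δ) ×ˢ (Ioo (0:ℝ) δ),
    curve p.1 - p.2 • normalVec (θ p.1) ∈ Ω

def StarkDomain.κ₀ (SD : StarkDomain) : ℝ := deriv SD.θ 0

def StarkDomain.τ (SD : StarkDomain) (s t : ℝ) : E2 :=
  SD.curve s - t • normalVec (SD.θ s)

/-!
Write `q = t + V - λ`, so that `φ'' = q φ` and `q(t) ≥ t - c` with `c = M + Λ`. Where `q ≥ 0`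
the product `φ φ'` is nondecreasing; as it vanishes at `ℓ` under either boundary condition, `φ²`
is nonincreasing on `[R - 2, ℓ]`, which bounds both `φ(R)²` and `-2 φ(R) φ'(R)` by `∫ φ²`.
For the weighted estimate, `F = e^{t^{3/2}} (5 φ φ' - ¾ √t φ²)` has `F' ≥ (φ'² + φ²) e^{t^{3/2}}`
once `t ≥ R = 8c + 16`, and `F(ℓ) ≤ 0`; so the weighted integral over `(R, ℓ)` is at most `-F(R)`.
-/

section StarkODE

variable {φ φ' q : ℝ → ℝ} {a b : ℝ}

theorem ContDiffOn.hasDerivAt_derivWithin_Icc {f : ℝ → ℝ} {n : WithTop ℕ∞}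
    (hf : ContDiffOn ℝ n f (Icc a b)) (hn : n ≠ 0) {t : ℝ} (ht : t ∈ Ioo a b) :
    HasDerivAt f (derivWithin f (Icc a b) t) t :=
  (hf.differentiableOn hn t (Ioo_subset_Icc_self ht)).hasDerivWithinAt.hasDerivAt
    (Icc_mem_nhds ht.1 ht.2)

theorem monotoneOn_mul_of_hasDerivAt_of_nonneg
    (hφ : ∀ t ∈ Ioo a b, HasDerivAt φ (φ' t) t)
    (hφ' : ∀ t ∈ Ioo a b, HasDerivAt φ' (q t * φ t) t) (hq : ∀ t ∈ Ioo a b, 0 ≤ q t)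
    (hφc : ContinuousOn φ (Icc a b)) (hφ'c : ContinuousOn φ' (Icc a b)) :
    MonotoneOn (fun t => φ t * φ' t) (Icc a b) := by
  refine monotoneOn_of_hasDerivWithinAt_nonneg (convex_Icc a b) (hφc.mul hφ'c)
    (fun t ht => ?_) (fun t ht => ?_) (f' := fun t => φ' t * φ' t + φ t * (q t * φ t))
  · rw [interior_Icc] at ht ⊢
    exact ((hφ t ht).mul (hφ' t ht)).hasDerivWithinAt
  · rw [interior_Icc] at ht
    nlinarith [mul_self_nonneg (φ' t), mul_nonneg (hq t ht) (mul_self_nonneg (φ t))]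

theorem antitoneOn_sq_of_hasDerivAt_of_nonneg
    (hφ : ∀ t ∈ Ioo a b, HasDerivAt φ (φ' t) t)
    (hφ' : ∀ t ∈ Ioo a b, HasDerivAt φ' (q t * φ t) t) (hq : ∀ t ∈ Ioo a b, 0 ≤ q t)
    (hφc : ContinuousOn φ (Icc a b)) (hφ'c : ContinuousOn φ' (Icc a b))
    (hb : φ b * φ' b = 0) :
    AntitoneOn (fun t => φ t ^ 2) (Icc a b) := by
  have hmono := monotoneOn_mul_of_hasDerivAt_of_nonneg hφ hφ' hq hφc hφ'c
  refine antitoneOn_of_hasDerivWithinAt_nonpos (convex_Icc a b) (hφc.pow 2)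
    (fun t ht => ?_) (fun t ht => ?_) (f' := fun t => 2 * (φ t * φ' t))
  · rw [interior_Icc] at ht ⊢
    exact (((hφ t ht).fun_pow 2).congr_deriv (by norm_num; ring)).hasDerivWithinAt
  · rw [interior_Icc] at ht
    have := hmono (Ioo_subset_Icc_self ht) ⟨ht.1.le.trans ht.2.le, le_rfl⟩ ht.2.le
    simp only [hb] at this
    linarith

theorem sub_le_mul_of_hasDerivAt_of_monotoneOn {f f' : ℝ → ℝ} (hab : a < b)
    (hf : ContinuousOn f (Icc a b)) (hf' : ∀ t ∈ Ioo a b, HasDerivAt f (f' t) t)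
    (hmono : MonotoneOn f' (Icc a b)) :
    f b - f a ≤ (b - a) * f' b := by
  obtain ⟨ξ, hξ, hslope⟩ := exists_hasDerivAt_eq_slope f f' hab hf hf'
  have := hmono (Ioo_subset_Icc_self hξ) (right_mem_Icc.2 hab.le) hξ.2.le
  rw [hslope, div_le_iff₀ (sub_pos.2 hab)] at this
  linarith

theorem sq_le_setIntegral_sq_and_neg_mul_le_setIntegral_sq {R : ℝ}
    (hφ : ∀ t ∈ Ioo a b, HasDerivAt φ (φ' t) t)
    (hφ' : ∀ t ∈ Ioo a b, HasDerivAt φ' (q t * φ t) t) (hq : ∀ t ∈ Ioo a b, 0 ≤ q t)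
    (hφc : ContinuousOn φ (Icc a b)) (hφ'c : ContinuousOn φ' (Icc a b))
    (hb : φ b * φ' b = 0) (haR : a + 2 ≤ R) (hRb : R ≤ b) :
    φ R ^ 2 ≤ ∫ t in Ioc a b, φ t ^ 2 ∧ -(2 * φ R * φ' R) ≤ ∫ t in Ioc a b, φ t ^ 2 := by
  have hanti := antitoneOn_sq_of_hasDerivAt_of_nonneg hφ hφ' hq hφc hφ'c hb
  have hmono := monotoneOn_mul_of_hasDerivAt_of_nonneg hφ hφ' hq hφc hφ'c
  have hsub : Icc (R - 2) R ⊆ Icc a b := Icc_subset_Icc (by linarith) hRb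
  have hmid : φ (R - 1) ^ 2 ≤ ∫ t in Ioc a b, φ t ^ 2 := calc
    φ (R - 1) ^ 2 ≤ ∫ t in (R - 2)..(R - 1), φ t ^ 2 := by
      simpa [show R - 2 + 1 = R - 1 by ring] using
        (hanti.mono ((Icc_subset_Icc le_rfl (by norm_num; linarith)).trans hsub)).sum_le_integral
          (x₀ := R - 2) (a := 1)
    _ = ∫ t in Ioc (R - 2) (R - 1), φ t ^ 2 := intervalIntegral.integral_of_le (by linarith)
    _ ≤ ∫ t in Ioc a b, φ t ^ 2 :=
      setIntegral_mono_set ((hφc.pow 2).integrableOn_Icc.mono_set Ioc_subset_Icc_self)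
        (.of_forall fun t => sq_nonneg (φ t))
        (Ioc_subset_Ioc (by linarith) (by linarith)).eventuallyLE
  have hdecay : φ R ^ 2 ≤ φ (R - 1) ^ 2 :=
    hanti (hsub ⟨by linarith, by linarith⟩) (hsub ⟨by linarith, le_rfl⟩) (by linarith)
  have hconvex : φ R ^ 2 - φ (R - 1) ^ 2 ≤ (R - (R - 1)) * (2 * (φ R * φ' R)) := by
    have hsub' : Icc (R - 1) R ⊆ Icc a b := (Icc_subset_Icc (by linarith) le_rfl).trans hsub
    refine sub_le_mul_of_hasDerivAt_of_monotoneOn (by linarith) ((hφc.mono hsub').pow 2)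
      (fun t ht => ((hφ t ?_).fun_pow 2).congr_deriv (by norm_num; ring))
      (fun s hs t ht hst => by linarith [hmono (hsub' hs) (hsub' ht) hst])
      (f' := fun t => 2 * (φ t * φ' t))
    exact ⟨by linarith [ht.1], by linarith [ht.2]⟩
  constructor <;> nlinarith [sq_nonneg (φ R)]

end StarkODE

def starkFlux (φ φ' : ℝ → ℝ) (t : ℝ) : ℝ :=
  exp (t ^ ((3:ℝ)/2)) * (5 * φ t * φ' t - 3/4 * √t * φ t ^ 2)

section StarkFlux

variable {φ φ' q : ℝ → ℝ}

theorem hasDerivAt_starkFlux {t : ℝ} (ht : 0 < t) (hφ : HasDerivAt φ (φ' t) t)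
    (hφ' : HasDerivAt φ' (q t * φ t) t) :
    HasDerivAt (starkFlux φ φ') (exp (t ^ ((3:ℝ)/2)) * (5 * φ' t ^ 2 + 6 * √t * φ t * φ' t
      + (5 * q t - 9/8 * t - 3 / (8 * √t)) * φ t ^ 2)) t := by
  have hpow : HasDerivAt (fun x => x ^ ((3:ℝ)/2)) (3/2 * √t) t := by
    convert Real.hasDerivAt_rpow_const (p := (3:ℝ)/2) (Or.inl ht.ne') using 1
    rw [sqrt_eq_rpow]
    norm_num
  have hflux := hpow.exp.fun_mul (((hφ.const_mul 5).fun_mul hφ').fun_sub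
    (((hasDerivAt_sqrt ht.ne').const_mul (3/4)).fun_mul (hφ.fun_pow 2)))
  refine hflux.congr_deriv ?_
  have hs : √t ≠ 0 := (sqrt_pos.2 ht).ne'
  field_simp
  norm_num
  linear_combination (-72 * √t * φ t ^ 2) * sq_sqrt ht.le

theorem sq_add_sq_le_starkFlux_deriv {c q t x y : ℝ} (hc : 0 ≤ c) (ht : 8 * c + 16 ≤ t)
    (hq : t - c ≤ q) :
    y ^ 2 + x ^ 2 ≤ 5 * y ^ 2 + 6 * √t * x * y + (5 * q - 9/8 * t - 3 / (8 * √t)) * x ^ 2 := by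
  have hss : √t * √t = t := mul_self_sqrt (by linarith)
  have hs : 4 ≤ √t := le_sqrt_of_sq_le (by linarith)
  have hm : 3 / (8 * √t) ≤ 1 := (div_le_one (by positivity)).2 (by linarith)
  -- the cross term is absorbed via `6 √t x y ≥ -4 y² - (9/4) t x²`
  nlinarith [sq_nonneg (2 * y + 3/2 * √t * x), mul_nonneg (sub_nonneg.2 hm) (sq_nonneg x),
    mul_nonneg (sub_nonneg.2 hq) (sq_nonneg x), mul_nonneg hc (sq_nonneg x),
    mul_nonneg (sub_nonneg.2 ht) (sq_nonneg x)]

theorem setIntegral_mul_exp_le_neg_starkFlux {b c R : ℝ} (hc : 0 ≤ c) (hR : 8 * c + 16 ≤ R)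
    (hRb : R ≤ b) (hφ : ∀ t ∈ Ioo R b, HasDerivAt φ (φ' t) t)
    (hφ' : ∀ t ∈ Ioo R b, HasDerivAt φ' (q t * φ t) t) (hq : ∀ t ∈ Ioo R b, t - c ≤ q t)
    (hφc : ContinuousOn φ (Icc R b)) (hφ'c : ContinuousOn φ' (Icc R b))
    (hb : φ b * φ' b = 0) :
    ∫ t in Ioc R b, (φ' t ^ 2 + φ t ^ 2) * exp (t ^ ((3:ℝ)/2)) ≤ -starkFlux φ φ' R := by
  have hexp : ContinuousOn (fun t : ℝ => exp (t ^ ((3:ℝ)/2))) (Icc R b) :=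
    (continuous_exp.comp (continuous_rpow_const (by norm_num))).continuousOn
  have hflux_b : starkFlux φ φ' b ≤ 0 := by
    have hb5 : 5 * φ b * φ' b = 0 := by linear_combination 5 * hb
    rw [starkFlux, hb5]
    exact mul_nonpos_of_nonneg_of_nonpos (exp_pos _).le
      (by nlinarith [mul_nonneg (sqrt_nonneg b) (sq_nonneg (φ b))])
  have hftc := intervalIntegral.integral_le_sub_of_hasDeriv_right_of_le hRb
    (hexp.fun_mul (((continuousOn_const.fun_mul hφc).fun_mul hφ'c).fun_sub
      ((continuousOn_const.fun_mul continuous_sqrt.continuousOn).fun_mul (hφc.fun_pow 2))))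
    (fun t ht => (hasDerivAt_starkFlux (by linarith [ht.1]) (hφ t ht) (hφ' t ht)).hasDerivWithinAt)
    (((hφ'c.fun_pow 2).fun_add (hφc.fun_pow 2)).fun_mul hexp).integrableOn_Icc
    (fun t ht => by
      rw [mul_comm]
      exact mul_le_mul_of_nonneg_left
        (sq_add_sq_le_starkFlux_deriv hc (by linarith [ht.1]) (hq t ht)) (exp_pos _).le)
  rw [intervalIntegral.integral_of_le hRb] at hftc
  rw [starkFlux] at hflux_b ⊢
  linarith

theorem neg_starkFlux_le {R N : ℝ} (hu : φ R ^ 2 ≤ N) (hw : -(2 * φ R * φ' R) ≤ N) :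
    -starkFlux φ φ' R ≤ exp (R ^ ((3:ℝ)/2)) * (3/4 * √R + 5/2) * N := by
  have hbracket : 3/4 * √R * φ R ^ 2 - 5 * φ R * φ' R ≤ (3/4 * √R + 5/2) * N := by
    nlinarith [mul_le_mul_of_nonneg_left hu (sqrt_nonneg R)]
  calc -starkFlux φ φ' R = exp (R ^ ((3:ℝ)/2)) * (3/4 * √R * φ R ^ 2 - 5 * φ R * φ' R) := by
        rw [starkFlux]; ring
    _ ≤ exp (R ^ ((3:ℝ)/2)) * ((3/4 * √R + 5/2) * N) :=
        mul_le_mul_of_nonneg_left hbracket (exp_pos _).le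
    _ = exp (R ^ ((3:ℝ)/2)) * (3/4 * √R + 5/2) * N := by ring

end StarkFlux

theorem stmt3 (Λ M : ℝ) (hΛ : 0 < Λ) (hM : 0 ≤ M) :
    ∃ R > (0:ℝ), ∃ C > (0:ℝ), ∀ ℓ : ℝ, R < ℓ →
      ∀ V : ℝ → ℝ, ContDiff ℝ (⊤ : ℕ∞) V → HasCompactSupport V →
        tsupport V ⊆ Set.Ioi 0 → (∀ t, |V t| ≤ M) →
      ∀ lam : ℝ, lam < Λ →
      ∀ φ : ℝ → ℝ, ContDiffOn ℝ 2 φ (Set.Icc 0 ℓ) →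
        (∃ t ∈ Set.Icc (0:ℝ) ℓ, φ t ≠ 0) →
        (∀ t ∈ Set.Ioo (0:ℝ) ℓ,
          -(derivWithin (fun u => derivWithin φ (Set.Icc 0 ℓ) u) (Set.Icc 0 ℓ) t)
              + (t + V t) * φ t = lam * φ t) →
        φ 0 = 0 →
        (φ ℓ = 0 ∨ derivWithin φ (Set.Icc 0 ℓ) ℓ = 0) →
        (∫ t in Set.Ioc R ℓ,
            (derivWithin φ (Set.Icc 0 ℓ) t ^ 2 + φ t ^ 2) * Real.exp (t ^ ((3:ℝ)/2)))
          ≤ C * ∫ t in Set.Ioc (0:ℝ) ℓ, φ t ^ 2 := by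
  have hc : 0 ≤ M + Λ := by linarith
  refine ⟨8 * (M + Λ) + 16, by positivity,
    exp ((8 * (M + Λ) + 16) ^ ((3:ℝ)/2)) * (3/4 * √(8 * (M + Λ) + 16) + 5/2), by positivity,
    fun ℓ hRℓ V _ _ _ hVM lam hlam φ hφ _ hode _ hbc => ?_⟩
  set R := 8 * (M + Λ) + 16
  set φ' := derivWithin φ (Icc 0 ℓ)
  have hφ' : ContDiffOn ℝ 1 φ' (Icc 0 ℓ) :=
    hφ.derivWithin (uniqueDiffOn_Icc (by linarith)) (by norm_num)
  have hsub : Icc (R - 2) ℓ ⊆ Icc 0 ℓ := Icc_subset_Icc (by linarith) le_rfl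
  have hsub' : Ioo (R - 2) ℓ ⊆ Ioo 0 ℓ := Ioo_subset_Ioo (by linarith) le_rfl
  have hderiv : ∀ t ∈ Ioo (R - 2) ℓ, HasDerivAt φ (φ' t) t :=
    fun t ht => hφ.hasDerivAt_derivWithin_Icc two_ne_zero (hsub' ht)
  have hderiv' : ∀ t ∈ Ioo (R - 2) ℓ, HasDerivAt φ' ((t + V t - lam) * φ t) t := fun t ht =>
    (hφ'.hasDerivAt_derivWithin_Icc one_ne_zero (hsub' ht)).congr_deriv
      (by linear_combination -hode t (hsub' ht))
  have hpotential : ∀ t, t - (M + Λ) ≤ t + V t - lam := fun t => by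
    linarith [(abs_le.1 (hVM t)).1]
  have hb : φ ℓ * φ' ℓ = 0 := by rcases hbc with h | h <;> simp [φ', h]
  obtain ⟨hu, hw⟩ := sq_le_setIntegral_sq_and_neg_mul_le_setIntegral_sq (R := R) hderiv hderiv'
    (fun t ht => by linarith [hpotential t, ht.1]) (hφ.continuousOn.mono hsub)
    (hφ'.continuousOn.mono hsub) hb (by linarith) hRℓ.le
  have hmass : ∫ t in Ioc (R - 2) ℓ, φ t ^ 2 ≤ ∫ t in Ioc 0 ℓ, φ t ^ 2 :=
    setIntegral_mono_set ((hφ.continuousOn.fun_pow 2).integrableOn_Icc.mono_set Ioc_subset_Icc_self)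
      (.of_forall fun t => sq_nonneg (φ t)) (Ioc_subset_Ioc (by linarith) le_rfl).eventuallyLE
  have hIcc : Icc R ℓ ⊆ Icc (R - 2) ℓ := Icc_subset_Icc (by linarith) le_rfl
  have hIoo : Ioo R ℓ ⊆ Ioo (R - 2) ℓ := Ioo_subset_Ioo (by linarith) le_rfl
  calc _ ≤ -starkFlux φ φ' R :=
        setIntegral_mul_exp_le_neg_starkFlux hc le_rfl hRℓ.le (fun t ht => hderiv t (hIoo ht))
          (fun t ht => hderiv' t (hIoo ht)) (fun t _ => hpotential t)
          (hφ.continuousOn.mono (hIcc.trans hsub)) (hφ'.continuousOn.mono (hIcc.trans hsub)) hb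
    _ ≤ _ := neg_starkFlux_le (hu.trans hmass) (hw.trans hmass)

end
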